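/- arXiv:2003.03142 — 4 statements merged into one kernel-verified Lean document; each statement's English description precedes it below -/
import Mathlib

section
/- Let G be a subgroup of the Boolean group 2^κ (functions from κ to ℤ/2 with pointwise addition, product topology). If for every coordinate-wise linearly independent indexed family {(x_n, y_n) : n ∈ ω} ⊆ G × G that is dense-related as follows—for every (u,v) ∈ G × G there exists a coordinate ε with u(ε) = v(ε) = 0 and max(x_n(ε), y_n(ε)) = 1 for all but finitely many n—then the set {(x_n, y_n) : n ∈ ω} is closed and discrete in G × G. -/
/-!
For a point `(u, v)`, the hypothesis supplies a coordinate `ε` at which `u` and `v` vanish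
while almost every `(x n, y n)` has a coordinate equal to `1`. So the basic open set
`{q | q.1 ε = 0 ∧ q.2 ε = 0}` around `(u, v)` contains only finitely many terms of the
sequence, and in the T₁ space `G × G` removing those finitely many points leaves a
neighbourhood of `(u, v)` that misses the rest of the sequence.
-/

instance : TopologicalSpace (ZMod 2) := ⊥

instance : DiscreteTopology (ZMod 2) := ⟨rfl⟩

open Filter Set Topology

theorem notMem_closure_range_diff_of_eventually_notMem {X ι : Type*} [TopologicalSpace X]
    [T1Space X] {s : ι → X} {p : X} {U : Set X} (hU : U ∈ 𝓝 p)
    (hs : ∀ᶠ i in cofinite, s i ∉ U) : p ∉ closure (range s \ {p}) := by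
  set S : Set ι := {i | s i ∈ U}
  have hS : S.Finite := by simpa only [eventually_cofinite, not_not] using hs
  have hnhds : U ∩ (s '' S \ {p})ᶜ ∈ 𝓝 p :=
    inter_mem hU <| ((hS.image s).subset sdiff_subset).isClosed.compl_mem_nhds fun h => h.2 rfl
  intro hp
  obtain ⟨_, ⟨hU, hS⟩, ⟨i, rfl⟩, hip⟩ := mem_closure_iff_nhds.mp hp _ hnhds
  exact hS ⟨mem_image_of_mem s hU, hip⟩

theorem stmt3_general {κ : Type*} (G : AddSubgroup (κ → ZMod 2)) (x y : ℕ → ↥G)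
    (hdense : ∀ u v : ↥G, ∃ ε : κ,
      (u : κ → ZMod 2) ε = 0 ∧ (v : κ → ZMod 2) ε = 0 ∧
      ∀ᶠ n in Filter.atTop, (x n : κ → ZMod 2) ε = 1 ∨ (y n : κ → ZMod 2) ε = 1) :
    ∀ p : ↥G × ↥G, p ∉ closure ({q : ↥G × ↥G | ∃ n, q = (x n, y n)} \ {p}) := by
  rintro ⟨u, v⟩
  obtain ⟨ε, hu, hv, hev⟩ := hdense u v
  have hrange : {q : ↥G × ↥G | ∃ n, q = (x n, y n)} = range fun n => (x n, y n) :=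
    Set.ext fun _ => exists_congr fun _ => eq_comm
  have hcoord : Continuous fun g : ↥G => (g : κ → ZMod 2) ε :=
    (continuous_apply ε).comp continuous_subtype_val
  let U : Set (↥G × ↥G) := {q | (q.1 : κ → ZMod 2) ε = 0 ∧ (q.2 : κ → ZMod 2) ε = 0}
  have hU : IsOpen U :=
    ((isOpen_discrete {0}).preimage (hcoord.comp continuous_fst)).inter
      ((isOpen_discrete {0}).preimage (hcoord.comp continuous_snd))
  rw [hrange]
  refine notMem_closure_range_diff_of_eventually_notMem (hU.mem_nhds (x := (u, v)) ⟨hu, hv⟩) ?_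
  rw [Nat.cofinite_eq_atTop]
  filter_upwards [hev] with n hn ⟨hxn, hyn⟩
  rcases hn with h | h
  · exact zero_ne_one (hxn.symm.trans h)
  · exact zero_ne_one (hyn.symm.trans h)

theorem stmt3 {κ : Type*} (G : AddSubgroup (κ → ZMod 2)) (x y : ℕ → ↥G)
    (hli : LinearIndependent (ZMod 2)
      (Sum.elim (fun n => ((x n : κ → ZMod 2))) (fun n => ((y n : κ → ZMod 2)))))
    (hdense : ∀ u v : ↥G, ∃ ε : κ,
      (u : κ → ZMod 2) ε = 0 ∧ (v : κ → ZMod 2) ε = 0 ∧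
      ∀ᶠ n in Filter.atTop, (x n : κ → ZMod 2) ε = 1 ∨ (y n : κ → ZMod 2) ε = 1) :
    ∀ p : ↥G × ↥G, p ∉ closure ({q : ↥G × ↥G | ∃ n, q = (x n, y n)} \ {p}) :=
  stmt3_general G x y hdense
end

section
/- Let V be an infinite-dimensional vector space over F₂ and D ⊆ V a dense subset of V × V where V ⊆ (ℤ/2)^κ carries the subspace topology of the product topology and D is dense in V × V. If V has no isolated points (equivalently the topology is non-discrete on every coset of every open subgroup), then there exists a countable subset {(x_n, y_n) : n ∈ ω} ⊆ D such that the indexed family {x_n, y_n : n ∈ ω} is linearly independent over F₂. -/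
/-!
Since `V` has no isolated points it is infinite, while the span `W` of finitely many vectors is
finite, hence closed. The pairs `(x, y)` with `x ∉ W` and `y ∉ W + 𝔽₂ x` form an open set (the
second condition means `y + a • x ∉ W` for each of the finitely many scalars `a`), nonempty
because `V` is infinite, so the dense set `D` meets it. Choosing such pairs recursively, with `W`
the span of all vectors chosen so far, every new vector avoids the span of the previous ones.
-/

open Set Submodule

theorem notMem_span_insert_iff {R M : Type*} [Ring R] [AddCommGroup M] [Module R M]
    {x y : M} {s : Set M} : y ∉ span R (insert x s) ↔ ∀ a : R, y + a • x ∉ span R s := by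
  simp [mem_span_insert']

theorem Finset.finite_span {R M : Type*} [Ring R] [Finite R] [AddCommGroup M] [Module R M]
    (t : Finset M) : (span R (t : Set M) : Set M).Finite :=
  have : Finite (span R (t : Set M)) := Module.finite_of_finite R
  Set.toFinite _

theorem exists_seq_linearIndependent_sumElim {K M : Type*} [DivisionRing K] [AddCommGroup M]
    [Module K M] {D : Set (M × M)}
    (hD : ∀ t : Finset M, ∃ p ∈ D,
      p.1 ∉ span K (t : Set M) ∧ p.2 ∉ span K (insert p.1 (t : Set M))) :
    ∃ x y : ℕ → M, (∀ n, (x n, y n) ∈ D) ∧ LinearIndependent K (Sum.elim x y) := by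
  classical
  choose step hstepD hstep₁ hstep₂ using hD
  let P : ℕ → Finset M := fun n => (fun t => insert (step t).2 (insert (step t).1 t))^[n] ∅
  let x n := (step (P n)).1
  let y n := (step (P n)).2
  let S : ℕ → Set (ℕ ⊕ ℕ) := fun n => Sum.inl '' Iio n ∪ Sum.inr '' Iio n
  have hS : ∀ n, S (n + 1) = insert (Sum.inr n) (insert (Sum.inl n) (S n)) := by
    intro n; ext (i | i) <;> simp [S] <;> omega
  have hP : ∀ n, (↑(P n) : Set M) = Sum.elim x y '' S n := by
    intro n
    induction n with
    | zero => simp [P, S]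
    | succ n ih =>
      rw [hS, image_insert_eq, image_insert_eq, ← ih]
      simp [P, x, y, Function.iterate_succ_apply']
  have hind : ∀ n, LinearIndepOn K (Sum.elim x y) (S n) := by
    intro n
    induction n with
    | zero => simp [S]
    | succ n ih =>
      have hl : Sum.inl n ∉ S n := by simp [S]
      have hr : Sum.inr n ∉ insert (Sum.inl n) (S n) := by simp [S]
      rw [hS, linearIndepOn_insert hr, linearIndepOn_insert hl, image_insert_eq, ← hP]
      exact ⟨⟨ih, hstep₁ (P n)⟩, hstep₂ (P n)⟩
  have hmono : Monotone S := fun m n hmn =>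
    union_subset_union (image_mono (Iio_subset_Iio hmn)) (image_mono (Iio_subset_Iio hmn))
  have hunion : (⋃ n, S n) = univ := by
    refine eq_univ_of_forall fun i => mem_iUnion.2 ?_
    rcases i with i | i <;> exact ⟨i + 1, by simp [S]⟩
  refine ⟨x, y, fun n => hstepD (P n), ?_⟩
  rw [← linearIndepOn_univ_iff, ← hunion]
  exact linearIndepOn_iUnion_of_directed hmono.directed_le hind

theorem Dense.exists_mem_notMem_span {R M : Type*} [Ring R] [Finite R] [AddCommGroup M]
    [Module R M] [TopologicalSpace M] [ContinuousAdd M] [ContinuousConstSMul R M] [T1Space M]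
    [Infinite M] {D : Set (M × M)} (hD : Dense D) (t : Finset M) :
    ∃ p ∈ D, p.1 ∉ span R (t : Set M) ∧ p.2 ∉ span R (insert p.1 (t : Set M)) := by
  classical
  set W := span R (t : Set M)
  have hWfin : (W : Set M).Finite := t.finite_span
  have hWc : IsOpen (W : Set M)ᶜ := hWfin.isClosed.isOpen_compl
  let G : Set (M × M) :=
    Prod.fst ⁻¹' (W : Set M)ᶜ ∩ ⋂ a : R, (fun p => p.2 + a • p.1) ⁻¹' (W : Set M)ᶜ
  have hGo : IsOpen G := (hWc.preimage continuous_fst).inter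
    (isOpen_iInter_of_finite fun a => hWc.preimage (by fun_prop))
  obtain ⟨x, hx⟩ := hWfin.infinite_compl.nonempty
  obtain ⟨y, hy⟩ := (insert x t).finite_span (R := R) |>.infinite_compl.nonempty
  rw [mem_compl_iff, Finset.coe_insert, SetLike.mem_coe, notMem_span_insert_iff] at hy
  obtain ⟨p, ⟨hp₁, hp₂⟩, hpD⟩ := hD.inter_open_nonempty G hGo ⟨(x, y), hx, mem_iInter.2 hy⟩
  exact ⟨p, hpD, hp₁, notMem_span_insert_iff.2 (mem_iInter.1 hp₂)⟩

theorem stmt12_general {κ : Type*} (V : Submodule (ZMod 2) (κ → ZMod 2))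
    (D : Set (↥V × ↥V)) (hD : Dense D)
    (hni : ∀ v : ↥V, (nhdsWithin v {v}ᶜ).NeBot) :
    ∃ x y : ℕ → ↥V, (∀ n, (x n, y n) ∈ D) ∧
      LinearIndependent (ZMod 2) (Sum.elim x y) := by
  have := hni 0
  have : Infinite V := infinite_univ_iff.1 (infinite_of_mem_nhds 0 Filter.univ_mem)
  exact exists_seq_linearIndependent_sumElim hD.exists_mem_notMem_span

theorem stmt12 {κ : Type*} (V : Submodule (ZMod 2) (κ → ZMod 2))
    (hinf : ¬ Module.Finite (ZMod 2) ↥V)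
    (D : Set (↥V × ↥V)) (hD : Dense D)
    (hni : ∀ v : ↥V, (nhdsWithin v {v}ᶜ).NeBot) :
    ∃ x y : ℕ → ↥V, (∀ n, (x n, y n) ∈ D) ∧
      LinearIndependent (ZMod 2) (Sum.elim x y) :=
  stmt12_general V D hD hni
end

section
/- Let E be a Boolean group, and define the poset P of all partial homomorphisms p from finite subgroups of E to ℤ/2 satisfying: x', y' ∈ dom(p) with p(x')=p(y')=0; for each n, x_n ∈ dom(p) iff y_n ∈ dom(p); if x_n ∈ dom(p) then max(p(x_n),p(y_n))=1; and [{x_n, y_n : x_n ∉ dom(p)}] ∩ dom(p) = {0}, ordered by reverse extension. Then any two elements p, p' of P whose domains generate a subgroup D with D ∩ [{x_n, y_n : x_n ∉ dom(p) ∪ dom(p')}] = {0} and which agree on dom(p) ∩ dom(p') have a common extension in P. -/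
/-!
Seen as partial ℤ-linear maps, `p.toFun` and `p'.toFun` agree on the intersection of their
domains, so `LinearPMap.sup` glues them to a homomorphism on `p.dom ⊔ p'.dom`. The side
conditions carry over because a nonzero `x n` or `y n` in `p.dom ⊔ p'.dom` must already lie in
`p.dom` or `p'.dom`: otherwise it is in the span of the pairs outside both domains, which meets
`p.dom ⊔ p'.dom` only in `0`.
-/

/-- A condition of the forcing poset: a homomorphism from a finite subgroup of the Boolean
group `E` to `ℤ/2` satisfying the side conditions. -/
structure Cond (E : Type*) [AddCommGroup E] [Module (ZMod 2) E]
    (x' y' : E) (x y : ℕ → E) where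
  dom : AddSubgroup E
  finite : (dom : Set E).Finite
  toFun : ↥dom →+ ZMod 2
  mem_x' : x' ∈ dom
  mem_y' : y' ∈ dom
  map_x' : toFun ⟨x', mem_x'⟩ = 0
  map_y' : toFun ⟨y', mem_y'⟩ = 0
  mem_iff : ∀ n, x n ∈ dom ↔ y n ∈ dom
  max_one : ∀ n (h : x n ∈ dom), toFun ⟨x n, h⟩ = 1 ∨ toFun ⟨y n, (mem_iff n).1 h⟩ = 1
  span_inter : ∀ v ∈ Submodule.span (ZMod 2)
      {w | ∃ n, x n ∉ dom ∧ (w = x n ∨ w = y n)}, v ∈ dom → v = 0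

section Gluing

variable {G H : Type*} [AddCommGroup G] [AddCommGroup H] {A B : AddSubgroup G}

def AddMonoidHom.toIntLinearPMap (f : A →+ H) : G →ₗ.[ℤ] H :=
  ⟨A.toIntSubmodule, f.toIntLinearMap⟩

theorem AddMonoidHom.exists_sup_extension (f : A →+ H) (g : B →+ H)
    (hfg : ∀ v (ha : v ∈ A) (hb : v ∈ B), f ⟨v, ha⟩ = g ⟨v, hb⟩) :
    ∃ h : ↥(A ⊔ B) →+ H, (∀ v (hv : v ∈ A), h ⟨v, AddSubgroup.mem_sup_left hv⟩ = f ⟨v, hv⟩) ∧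
      (∀ v (hv : v ∈ B), h ⟨v, AddSubgroup.mem_sup_right hv⟩ = g ⟨v, hv⟩) := by
  have hcompat : ∀ (a : f.toIntLinearPMap.domain) (b : g.toIntLinearPMap.domain),
      (a : G) = b → f.toIntLinearPMap a = g.toIntLinearPMap b := by
    rintro ⟨v, hv⟩ ⟨w, hw⟩ (rfl : v = w)
    exact hfg v hv hw
  have hleft := f.toIntLinearPMap.left_le_sup g.toIntLinearPMap hcompat
  have hright := f.toIntLinearPMap.right_le_sup g.toIntLinearPMap hcompat
  set F := f.toIntLinearPMap.sup g.toIntLinearPMap hcompat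
  have hdom : A ⊔ B ≤ F.domain.toAddSubgroup := sup_le hleft.1 hright.1
  refine ⟨F.toFun.toAddMonoidHom.comp (AddSubgroup.inclusion hdom), fun v hv => ?_,
    fun v hv => ?_⟩
  · exact (hleft.2 (x := ⟨v, hv⟩) (y := ⟨v, hdom (AddSubgroup.mem_sup_left hv)⟩) rfl).symm
  · exact (hright.2 (x := ⟨v, hv⟩) (y := ⟨v, hdom (AddSubgroup.mem_sup_right hv)⟩) rfl).symm

end Gluing

namespace Cond

variable {E : Type*} [AddCommGroup E] [Module (ZMod 2) E] {x' y' : E} {x y : ℕ → E}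
  {p p' : Cond E x' y' x y}

theorem x_mem_sup_iff (hsup : ∀ v ∈ Submodule.span (ZMod 2)
      {w | ∃ n, (x n ∉ p.dom ∧ x n ∉ p'.dom) ∧ (w = x n ∨ w = y n)},
      v ∈ p.dom ⊔ p'.dom → v = 0) {n : ℕ} (hx : x n ≠ 0) :
    x n ∈ p.dom ⊔ p'.dom ↔ x n ∈ p.dom ∨ x n ∈ p'.dom := by
  refine ⟨fun h => ?_, fun h => h.elim AddSubgroup.mem_sup_left AddSubgroup.mem_sup_right⟩
  by_contra! hn
  exact hx (hsup _ (Submodule.subset_span ⟨n, hn, .inl rfl⟩) h)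

theorem y_mem_sup_iff (hsup : ∀ v ∈ Submodule.span (ZMod 2)
      {w | ∃ n, (x n ∉ p.dom ∧ x n ∉ p'.dom) ∧ (w = x n ∨ w = y n)},
      v ∈ p.dom ⊔ p'.dom → v = 0) {n : ℕ} (hy : y n ≠ 0) :
    y n ∈ p.dom ⊔ p'.dom ↔ x n ∈ p.dom ∨ x n ∈ p'.dom := by
  rw [p.mem_iff, p'.mem_iff]
  refine ⟨fun h => ?_, fun h => h.elim AddSubgroup.mem_sup_left AddSubgroup.mem_sup_right⟩
  by_contra! hn
  rw [← p.mem_iff, ← p'.mem_iff] at hn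
  exact hy (hsup _ (Submodule.subset_span ⟨n, hn, .inr rfl⟩) h)

end Cond

theorem stmt14_general {E : Type*} [AddCommGroup E] [Module (ZMod 2) E]
    (x' y' : E) (x y : ℕ → E)
    (hli : LinearIndependent (ZMod 2) (Sum.elim x y))
    (p p' : Cond E x' y' x y)
    (hagree : ∀ v (h1 : v ∈ p.dom) (h2 : v ∈ p'.dom), p.toFun ⟨v, h1⟩ = p'.toFun ⟨v, h2⟩)
    (hsup : ∀ v ∈ Submodule.span (ZMod 2)
      {w | ∃ n, (x n ∉ p.dom ∧ x n ∉ p'.dom) ∧ (w = x n ∨ w = y n)},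
      v ∈ p.dom ⊔ p'.dom → v = 0) :
    ∃ r : Cond E x' y' x y, ∃ (h1 : p.dom ≤ r.dom) (h2 : p'.dom ≤ r.dom),
      r.dom = p.dom ⊔ p'.dom ∧
      (∀ v (hv : v ∈ p.dom), r.toFun ⟨v, h1 hv⟩ = p.toFun ⟨v, hv⟩) ∧
      (∀ v (hv : v ∈ p'.dom), r.toFun ⟨v, h2 hv⟩ = p'.toFun ⟨v, hv⟩) := by
  obtain ⟨g, hg, hg'⟩ := p.toFun.exists_sup_extension p'.toFun hagree
  have hx n := Cond.x_mem_sup_iff hsup (hli.ne_zero (Sum.inl n) :)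
  have hy n := Cond.y_mem_sup_iff hsup (hli.ne_zero (Sum.inr n) :)
  refine ⟨{
    dom := p.dom ⊔ p'.dom
    finite := by rw [AddSubgroup.add_normal]; exact p.finite.add p'.finite
    toFun := g
    mem_x' := AddSubgroup.mem_sup_left p.mem_x'
    mem_y' := AddSubgroup.mem_sup_left p.mem_y'
    map_x' := (hg _ p.mem_x').trans p.map_x'
    map_y' := (hg _ p.mem_y').trans p.map_y'
    mem_iff := fun n => (hx n).trans (hy n).symm
    max_one := fun n h => ?_
    span_inter := fun v hv => hsup v (Submodule.span_mono ?_ hv) },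
    le_sup_left, le_sup_right, rfl, hg, hg'⟩
  · rcases (hx n).1 h with hp | hp
    · exact (p.max_one n hp).imp (hg _ hp).trans (hg _ _).trans
    · exact (p'.max_one n hp).imp (hg' _ hp).trans (hg' _ _).trans
  · rintro w ⟨n, hn, hw⟩
    exact ⟨n, ⟨hn ∘ AddSubgroup.mem_sup_left, hn ∘ AddSubgroup.mem_sup_right⟩, hw⟩

theorem stmt14 {E : Type*} [AddCommGroup E] [Module (ZMod 2) E]
    (x' y' : E) (x y : ℕ → E)
    (hli : LinearIndependent (ZMod 2) (Sum.elim x y))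
    (hinter : Submodule.span (ZMod 2) {x', y'} ⊓
      Submodule.span (ZMod 2) (Set.range x ∪ Set.range y) = ⊥)
    (p p' : Cond E x' y' x y)
    (hagree : ∀ v (h1 : v ∈ p.dom) (h2 : v ∈ p'.dom), p.toFun ⟨v, h1⟩ = p'.toFun ⟨v, h2⟩)
    (hsup : ∀ v ∈ Submodule.span (ZMod 2)
      {w | ∃ n, (x n ∉ p.dom ∧ x n ∉ p'.dom) ∧ (w = x n ∨ w = y n)},
      v ∈ p.dom ⊔ p'.dom → v = 0) :
    ∃ r : Cond E x' y' x y, ∃ (h1 : p.dom ≤ r.dom) (h2 : p'.dom ≤ r.dom),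
      r.dom = p.dom ⊔ p'.dom ∧
      (∀ v (hv : v ∈ p.dom), r.toFun ⟨v, h1 hv⟩ = p.toFun ⟨v, hv⟩) ∧
      (∀ v (hv : v ∈ p'.dom), r.toFun ⟨v, h2 hv⟩ = p'.toFun ⟨v, hv⟩) :=
  stmt14_general x' y' x y hli p p' hagree hsup
end

section
/- With P as in the forcing for extending homomorphisms on a Boolean group E (conditions are homomorphisms from finite subgroups to ℤ/2 with side conditions), for every p ∈ P, every i ∈ {0,1}, every x ∈ E \ dom(p), and every n with {x_n, y_n} ⊄ dom(p), there is q ≤ p in P with {x, x_n, y_n} ⊆ dom(q) and q(x) = i. -/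
open Submodule

section LinearAlgebra

variable {K V W ι : Type*} [Field K] [AddCommGroup V] [Module K V] [AddCommGroup W] [Module K W]

theorem LinearIndependent.exists_linearMap_apply_eq {b : ι → V} (hb : LinearIndependent K b)
    (c : ι → W) : ∃ h : V →ₗ[K] W, ∀ j, h (b j) = c j := by
  obtain ⟨h, hh⟩ := LinearMap.exists_extend ((Module.Basis.span hb).constr K c)
  refine ⟨h, fun j => ?_⟩
  have := LinearMap.congr_fun hh (Module.Basis.span hb j)
  rwa [Module.Basis.constr_basis, LinearMap.comp_apply, Submodule.subtype_apply,
    Module.Basis.span_apply] at this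

theorem Submodule.exists_extend_of_linearIndependent_mkQ {D : Submodule K V} (f : D →ₗ[K] W)
    {b : ι → V} (hb : LinearIndependent K (D.mkQ ∘ b)) (c : ι → W) :
    ∃ F : V →ₗ[K] W, F.comp D.subtype = f ∧ ∀ j, F (b j) = c j := by
  obtain ⟨g, hg⟩ := LinearMap.exists_extend f
  obtain ⟨h, hh⟩ := hb.exists_linearMap_apply_eq (fun j => c j - g (b j))
  refine ⟨g + h ∘ₗ D.mkQ, ?_, fun j => ?_⟩
  · ext d
    simp [← hg, (Quotient.mk_eq_zero D).2 d.2]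
  · rw [LinearMap.add_apply, LinearMap.comp_apply, show h (D.mkQ (b j)) = _ from hh j,
      add_sub_cancel]

theorem LinearIndependent.exists_dual_apply_eq_one_subsingleton_support {b : ι → V}
    (hb : LinearIndependent K b) {u : V} (hu : u ≠ 0) :
    ∃ h : V →ₗ[K] K, h u = 1 ∧ (Function.support (h ∘ b)).Subsingleton := by
  classical
  by_cases hspan : u ∈ span K (Set.range b)
  · obtain ⟨a, rfl⟩ := Finsupp.mem_span_range_iff_exists_finsupp.1 hspan
    obtain ⟨j₀, hj₀⟩ : a.support.Nonempty :=
      Finsupp.support_nonempty_iff.2 (by rintro rfl; simp at hu)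
    obtain ⟨h, hh⟩ := hb.exists_linearMap_apply_eq (Pi.single j₀ (a j₀)⁻¹)
    refine ⟨h, ?_, ?_⟩
    · simp [map_finsuppSum, hh, Pi.single_apply, hj₀, Finsupp.mem_support_iff.1 hj₀]
    · refine (Set.subsingleton_singleton (a := j₀)).anti fun j hj => ?_
      by_contra hne
      exact hj (by simp [hh, show j ≠ j₀ from hne])
  · obtain ⟨h, hh⟩ := (linearIndependent_option'.2 ⟨hb, hspan⟩).exists_linearMap_apply_eq
      (fun o => o.elim (1 : K) fun _ => 0)
    have hzero : ∀ j, h (b j) = 0 := fun j => hh (some j)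
    refine ⟨h, hh none, ?_⟩
    simp [Function.comp_def, hzero]

theorem LinearIndependent.exists_finite_disjoint_span_insert {b : ι → V}
    (hb : LinearIndependent K b) (u : V) :
    ∃ s : Set ι, s.Finite ∧
      ∀ t, s ⊆ t → Disjoint (span K (insert u (b '' t))) (span K (b '' tᶜ)) := by
  by_cases hspan : u ∈ span K (Set.range b)
  · obtain ⟨a, rfl⟩ := Finsupp.mem_span_range_iff_exists_finsupp.1 hspan
    refine ⟨a.support, a.support.finite_toSet, fun t ht => ?_⟩
    rw [span_insert_eq_span]
    · exact hb.disjoint_span_image disjoint_compl_right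
    · exact (Finsupp.mem_span_image_iff_linearCombination K).2 ⟨a, ht, rfl⟩
  · refine ⟨∅, Set.finite_empty, fun t _ => ?_⟩
    have := (linearIndependent_option'.2 ⟨hb, hspan⟩).disjoint_span_image
      (s := insert none (some '' t)) (t := some '' tᶜ) <| Set.disjoint_insert_left.2
        ⟨by simp, (Set.disjoint_image_iff (Option.some_injective _)).2 disjoint_compl_right⟩
    simpa [Set.image_insert_eq, Set.image_image] using this

end LinearAlgebra

theorem Submodule.disjoint_sup_of_disjoint_map_mkQ {R M : Type*} [Ring R] [AddCommGroup M]
    [Module R M] {D W U : Submodule R M} (hWD : Disjoint W D)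
    (h : Disjoint (W.map D.mkQ) (U.map D.mkQ)) : Disjoint W (D ⊔ U) := by
  rw [disjoint_def] at hWD h ⊢
  intro z hzW hzDU
  obtain ⟨d, hd, u, hu, rfl⟩ := mem_sup.1 hzDU
  refine hWD _ hzW ((Quotient.mk_eq_zero D).1 (h _ (mem_map_of_mem hzW) ?_))
  simpa [(Quotient.mk_eq_zero D).2 hd] using mem_map_of_mem (f := D.mkQ) hu

theorem Submodule.finite_coe_sup_span {R M : Type*} [Ring R] [Finite R] [AddCommGroup M]
    [Module R M] {D : Submodule R M} (hD : (D : Set M).Finite) {s : Set M} (hs : s.Finite) :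
    ((D ⊔ span R s : Submodule R M) : Set M).Finite := by
  have := Module.Finite.span_of_finite R hs
  have := Module.finite_of_finite R (M := span R s)
  rw [coe_sup]
  exact hD.add (Set.toFinite _)

namespace Cond

variable {E : Type*} [AddCommGroup E] [Module (ZMod 2) E] {x' y' : E} {x y : ℕ → E}

abbrev domSubmodule (p : Cond E x' y' x y) : Submodule (ZMod 2) E :=
  AddSubgroup.toZModSubmodule 2 p.dom

/-- `Sum.inl m` and `Sum.inr m` index the generators `x m` and `y m`; an index is free when its
pair lies outside the domain of `p`. -/
def freeIndices (p : Cond E x' y' x y) : Set (ℕ ⊕ ℕ) := {s | x (Sum.elim id id s) ∉ p.dom}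

theorem linearIndependent_mkQ (p : Cond E x' y' x y)
    (hli : LinearIndependent (ZMod 2) (Sum.elim x y)) :
    LinearIndependent (ZMod 2)
      (p.domSubmodule.mkQ ∘ fun j : p.freeIndices => Sum.elim x y j.1) := by
  refine (hli.comp _ Subtype.val_injective).map ?_
  rw [ker_mkQ, disjoint_def]
  intro z hz hzD
  refine p.span_inter z (span_mono ?_ hz) hzD
  rintro _ ⟨⟨m | m, hm⟩, rfl⟩
  · exact ⟨m, hm, Or.inl rfl⟩
  · exact ⟨m, hm, Or.inr rfl⟩

theorem exists_linearMap_extension (p : Cond E x' y' x y)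
    (hli : LinearIndependent (ZMod 2) (Sum.elim x y)) {v : E} (hv : v ∉ p.dom) (i : ZMod 2) :
    ∃ F : E →ₗ[ZMod 2] ZMod 2, (∀ d (hd : d ∈ p.dom), F d = p.toFun ⟨d, hd⟩) ∧ F v = i ∧
      ∀ m, F (x m) = 1 ∨ F (y m) = 1 := by
  have hb := p.linearIndependent_mkQ hli
  obtain ⟨F₀, hF₀p, hF₀b⟩ := p.domSubmodule.exists_extend_of_linearIndependent_mkQ
    (AddMonoidHom.toZModLinearMap 2 (M := p.domSubmodule) p.toFun) hb (fun _ => 1)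
  obtain ⟨e, hev, he⟩ := hb.exists_dual_apply_eq_one_subsingleton_support
    (u := p.domSubmodule.mkQ v) (by simpa using hv)
  set F := F₀ + (i - F₀ v) • e ∘ₗ p.domSubmodule.mkQ
  have hFp : ∀ d (hd : d ∈ p.dom), F d = p.toFun ⟨d, hd⟩ := fun d hd => by
    simp only [F, LinearMap.add_apply, LinearMap.smul_apply, LinearMap.comp_apply,
      (Quotient.mk_eq_zero p.domSubmodule).2 hd, map_zero, smul_zero, add_zero, mkQ_apply]
    exact LinearMap.congr_fun hF₀p ⟨d, hd⟩
  have hFv : F v = i := by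
    simp only [F, LinearMap.add_apply, LinearMap.smul_apply, LinearMap.comp_apply, hev,
      smul_eq_mul, mul_one, add_sub_cancel]
  refine ⟨F, hFp, hFv, fun m => ?_⟩
  by_cases hm : x m ∈ p.dom
  · rw [hFp _ hm, hFp _ ((p.mem_iff m).1 hm)]
    exact p.max_one m hm
  · have hx := hF₀b ⟨Sum.inl m, hm⟩
    have hy := hF₀b ⟨Sum.inr m, hm⟩
    -- `F₀` is `1` on both generators of the free pair and `e` vanishes on one of them.
    have : e (p.domSubmodule.mkQ (x m)) = 0 ∨ e (p.domSubmodule.mkQ (y m)) = 0 := by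
      by_contra! h
      exact Sum.inl_ne_inr (congrArg Subtype.val
        (he (x := ⟨Sum.inl m, hm⟩) (y := ⟨Sum.inr m, hm⟩) h.1 h.2))
    simp only [F, LinearMap.add_apply, LinearMap.smul_apply, LinearMap.comp_apply]
    rcases this with h | h
    · left
      rw [h, smul_zero, add_zero]
      exact hx
    · right
      rw [h, smul_zero, add_zero]
      exact hy

theorem exists_finset_forall_superset_disjoint (p : Cond E x' y' x y)
    (hli : LinearIndependent (ZMod 2) (Sum.elim x y)) (v : E) :
    ∃ N₀ : Finset ℕ, ∀ N : Finset ℕ, N₀ ⊆ N →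
      Disjoint (span (ZMod 2) {w | ∃ m, x m ∉ p.dom ∧ m ∉ N ∧ (w = x m ∨ w = y m)})
        (p.domSubmodule ⊔ span (ZMod 2) (insert v (x '' N ∪ y '' N))) := by
  have hb := p.linearIndependent_mkQ hli
  obtain ⟨s, hs, hdisj⟩ := hb.exists_finite_disjoint_span_insert (p.domSubmodule.mkQ v)
  refine ⟨hs.toFinset.image fun j => Sum.elim id id j.1, fun N hN => ?_⟩
  apply disjoint_sup_of_disjoint_map_mkQ
  · rw [disjoint_def]
    intro z hz hzD
    refine p.span_inter z (span_mono ?_ hz) hzD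
    rintro w ⟨m, hm, -, hw⟩
    exact ⟨m, hm, hw⟩
  set t : Set p.freeIndices := {j | Sum.elim id id j.1 ∈ N}
  have hst : s ⊆ t := fun j hj => hN (Finset.mem_image_of_mem _ (hs.mem_toFinset.2 hj))
  refine (hdisj t hst).symm.mono ?_ ?_
  · rw [map_span, span_le]
    rintro _ ⟨w, ⟨m, hm, hmN, rfl | rfl⟩, rfl⟩
    · exact subset_span ⟨⟨Sum.inl m, hm⟩, hmN, rfl⟩
    · exact subset_span ⟨⟨Sum.inr m, hm⟩, hmN, rfl⟩
  · rw [map_span, span_le]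
    rintro _ ⟨w, hw, rfl⟩
    rcases hw with rfl | ⟨m, hm, rfl⟩ | ⟨m, hm, rfl⟩
    · exact subset_span (Set.mem_insert _ _)
    all_goals by_cases hx : x m ∈ p.dom
    · simp [(Quotient.mk_eq_zero p.domSubmodule).2 hx]
    · exact subset_span (Set.mem_insert_of_mem _ ⟨⟨Sum.inl m, hx⟩, hm, rfl⟩)
    · simp [(Quotient.mk_eq_zero p.domSubmodule).2 ((p.mem_iff m).1 hx)]
    · exact subset_span (Set.mem_insert_of_mem _ ⟨⟨Sum.inr m, hx⟩, hm, rfl⟩)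

theorem exists_of_linearMap (p : Cond E x' y' x y) (D' : Submodule (ZMod 2) E)
    (hfin : (D' : Set E).Finite) (hle : p.domSubmodule ≤ D') (F : E →ₗ[ZMod 2] ZMod 2)
    (hFp : ∀ d (hd : d ∈ p.dom), F d = p.toFun ⟨d, hd⟩) (hpair : ∀ m, F (x m) = 1 ∨ F (y m) = 1)
    (N : Finset ℕ) (hN : ∀ m ∈ N, x m ∈ D' ∧ y m ∈ D')
    (hdisj : Disjoint (span (ZMod 2) {w | ∃ m, x m ∉ p.dom ∧ m ∉ N ∧ (w = x m ∨ w = y m)}) D') :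
    ∃ q : Cond E x' y' x y, q.dom = D'.toAddSubgroup ∧
      ∀ w (hw : w ∈ q.dom), q.toFun ⟨w, hw⟩ = F w := by
  have hzero : ∀ m, x m ∉ p.dom → m ∉ N → ∀ w, (w = x m ∨ w = y m) → w ∈ D' → w = 0 :=
    fun m hm hmN w hw hwD => disjoint_def.1 hdisj w (subset_span ⟨m, hm, hmN, hw⟩) hwD
  have hmem_iff : ∀ m, x m ∈ D' ↔ y m ∈ D' := by
    intro m
    by_cases hm : x m ∈ p.dom
    · exact iff_of_true (hle hm) (hle ((p.mem_iff m).1 hm))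
    by_cases hmN : m ∈ N
    · exact iff_of_true (hN m hmN).1 (hN m hmN).2
    refine iff_of_false (fun h => hm ?_) (fun h => hm ((p.mem_iff m).2 ?_))
    · exact hzero m hm hmN _ (Or.inl rfl) h ▸ p.dom.zero_mem
    · exact hzero m hm hmN _ (Or.inr rfl) h ▸ p.dom.zero_mem
  refine ⟨{ dom := D'.toAddSubgroup
            finite := hfin
            toFun := F.toAddMonoidHom.comp D'.toAddSubgroup.subtype
            mem_x' := hle p.mem_x'
            mem_y' := hle p.mem_y'
            map_x' := (hFp _ p.mem_x').trans p.map_x'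
            map_y' := (hFp _ p.mem_y').trans p.map_y'
            mem_iff := hmem_iff
            max_one := fun m _ => hpair m
            span_inter := fun w hw hwD => disjoint_def.1 hdisj w (span_mono ?_ hw) hwD },
    rfl, fun _ _ => rfl⟩
  rintro w ⟨m, hm, hw⟩
  exact ⟨m, fun h => hm (hle h), fun h => hm (hN m h).1, hw⟩

end Cond

theorem stmt15_general {E : Type*} [AddCommGroup E] [Module (ZMod 2) E]
    (x' y' : E) (x y : ℕ → E)
    (hli : LinearIndependent (ZMod 2) (Sum.elim x y))
    (p : Cond E x' y' x y) (i : ZMod 2) (v : E) (hv : v ∉ p.dom)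
    (n : ℕ) :
    ∃ q : Cond E x' y' x y, ∃ h : p.dom ≤ q.dom,
      (∀ w (hw : w ∈ p.dom), q.toFun ⟨w, h hw⟩ = p.toFun ⟨w, hw⟩) ∧
      x n ∈ q.dom ∧ y n ∈ q.dom ∧
      ∃ hvq : v ∈ q.dom, q.toFun ⟨v, hvq⟩ = i := by
  obtain ⟨F, hFp, hFv, hpair⟩ := p.exists_linearMap_extension hli hv i
  obtain ⟨N₀, hN₀⟩ := p.exists_finset_forall_superset_disjoint hli v
  set N := insert n N₀
  set D' := p.domSubmodule ⊔ span (ZMod 2) (insert v (x '' N ∪ y '' N))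
  have hvD' : v ∈ D' := mem_sup_right (subset_span (Set.mem_insert _ _))
  have hND' : ∀ m ∈ N, x m ∈ D' ∧ y m ∈ D' := fun m hm =>
    ⟨mem_sup_right (subset_span (Set.mem_insert_of_mem _ (Or.inl ⟨m, hm, rfl⟩))),
      mem_sup_right (subset_span (Set.mem_insert_of_mem _ (Or.inr ⟨m, hm, rfl⟩)))⟩
  have hfin : (D' : Set E).Finite := finite_coe_sup_span p.finite
    (((N.finite_toSet.image x).union (N.finite_toSet.image y)).insert v)
  obtain ⟨q, hqdom, hqF⟩ := p.exists_of_linearMap D' hfin le_sup_left F hFp hpair N hND'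
    (hN₀ N (Finset.subset_insert _ _))
  have hq : ∀ w ∈ D', w ∈ q.dom := fun w hw => hqdom ▸ hw
  have hnN : n ∈ N := Finset.mem_insert_self _ _
  exact ⟨q, fun w hw => hq w (mem_sup_left hw), fun w hw => (hqF _ _).trans (hFp w hw),
    hq _ (hND' n hnN).1, hq _ (hND' n hnN).2, hq v hvD', (hqF _ _).trans hFv⟩

theorem stmt15 {E : Type*} [AddCommGroup E] [Module (ZMod 2) E]
    (x' y' : E) (x y : ℕ → E)
    (hli : LinearIndependent (ZMod 2) (Sum.elim x y))
    (hinter : Submodule.span (ZMod 2) {x', y'} ⊓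
      Submodule.span (ZMod 2) (Set.range x ∪ Set.range y) = ⊥)
    (p : Cond E x' y' x y) (i : ZMod 2) (v : E) (hv : v ∉ p.dom)
    (n : ℕ) (hn : ¬ ({x n, y n} : Set E) ⊆ (p.dom : Set E)) :
    ∃ q : Cond E x' y' x y, ∃ h : p.dom ≤ q.dom,
      (∀ w (hw : w ∈ p.dom), q.toFun ⟨w, h hw⟩ = p.toFun ⟨w, hw⟩) ∧
      x n ∈ q.dom ∧ y n ∈ q.dom ∧
      ∃ hvq : v ∈ q.dom, q.toFun ⟨v, hvq⟩ = i :=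
  stmt15_general x' y' x y hli p i v hv n
end
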